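/- arXiv:1210.2761 — 5 statements merged into one kernel-verified Lean document; each statement's English description precedes it below -/
import Mathlib

section
/- Let z > 2 be a real number and let a ∈ (0,1). Then the pressure exerted by an adsorbing Dyck path on the adsorbing line at the point 2⌊an/2⌋ tends, as n → ∞ through even values, to −log(z−1); that is, lim_{n→∞, n even} P_n^D(z; 2⌊an/2⌋) = −log(z−1). -/
open Filter Real

/-- Partition function of adsorbing Dyck paths of length `2ν`:
`D_{2ν}(z) = Σ_{m=0}^{ν} ((2m+1)/(ν+m+1))·C(2ν, ν+m)·(z−1)^m`. -/
noncomputable def Dp (ν : ℕ) (z : ℝ) : ℝ :=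
  ∑ m ∈ Finset.range (ν + 1),
    ((2 * (m : ℝ) + 1) / ((ν : ℝ) + m + 1)) * (Nat.choose (2 * ν) (ν + m)) * (z - 1) ^ m

/-- Partition function of adsorbing directed paths of length `2ν`:
`T_{2ν}(z) = Σ_{m=0}^{ν} C(2ν, ν+m)·(z−1)^m`. -/
noncomputable def Tp (ν : ℕ) (z : ℝ) : ℝ :=
  ∑ m ∈ Finset.range (ν + 1), (Nat.choose (2 * ν) (ν + m) : ℝ) * (z - 1) ^ m

/-- Pressure of an adsorbing Dyck path of length `n = 2ν` at the point `q = 2κ`: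
`P_n^D(z;q) = log(1 − D_q(z)·D_{n−q}(z)/D_n(z))`. -/
noncomputable def PD (ν κ : ℕ) (z : ℝ) : ℝ :=
  Real.log (1 - Dp κ z * Dp (ν - κ) z / Dp ν z)

/-- Pressure of an adsorbing directed path of length `n = 2ν` at the point `q = 2κ`:
`P_n^T(z;q) = log(1 − D_q(z)·T_{n−q}(z)/T_n(z))`. -/
noncomputable def PT (ν κ : ℕ) (z : ℝ) : ℝ :=
  Real.log (1 - Dp κ z * Tp (ν - κ) z / Tp ν z)

lemma ballot (ν m : ℕ) (hm : m ≤ ν) :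
    ((2 * (m : ℝ) + 1) / ((ν : ℝ) + m + 1)) * (Nat.choose (2 * ν) (ν + m)) =
      (Nat.choose (2 * ν) (ν + m) : ℝ) - (Nat.choose (2 * ν) (ν + m + 1) : ℝ) := by
  have h := Nat.choose_succ_right_eq (2 * ν) (ν + m)
  have h2 : 2 * ν - (ν + m) = ν - m := by omega
  rw [h2] at h
  have h3 : (Nat.choose (2*ν) (ν+m+1) : ℝ) * ((ν:ℝ) + m + 1)
      = (Nat.choose (2*ν) (ν+m) : ℝ) * ((ν:ℝ) - m) := by
    have := congrArg (Nat.cast (R := ℝ)) h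
    push_cast [hm] at this
    linarith [this]
  have hpos : ((ν:ℝ) + m + 1) ≠ 0 := by positivity
  field_simp
  nlinarith [h3]

lemma key1 (ν : ℕ) (z : ℝ) :
    (z - 1) * Dp ν z = (z - 2) * Tp ν z + (Nat.choose (2 * ν) ν : ℝ) := by
  have hD : Dp ν z = ∑ m ∈ Finset.range (ν + 1),
      ((Nat.choose (2*ν) (ν+m) : ℝ) - (Nat.choose (2*ν) (ν+m+1) : ℝ)) * (z-1)^m := by
    unfold Dp
    refine Finset.sum_congr rfl fun m hm => ?_
    rw [ballot ν m (by simpa using Nat.lt_succ_iff.mp (Finset.mem_range.mp hm))]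
  have e1 : (z-1) * Dp ν z - (z-2) * Tp ν z
      = ∑ m ∈ Finset.range (ν + 1),
        ((Nat.choose (2*ν) (ν+m) : ℝ) * (z-1)^m
          - (Nat.choose (2*ν) (ν+m+1) : ℝ) * (z-1)^(m+1)) := by
    rw [hD]
    unfold Tp
    rw [Finset.mul_sum, Finset.mul_sum, ← Finset.sum_sub_distrib]
    refine Finset.sum_congr rfl fun m hm => ?_
    ring
  rw [Finset.sum_sub_distrib] at e1
  have e2 : ∑ m ∈ Finset.range (ν + 1), (Nat.choose (2*ν) (ν+m) : ℝ) * (z-1)^m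
      = (Nat.choose (2*ν) ν : ℝ)
        + ∑ m ∈ Finset.range ν, (Nat.choose (2*ν) (ν+(m+1)) : ℝ) * (z-1)^(m+1) := by
    rw [Finset.sum_range_succ' (fun m => (Nat.choose (2*ν) (ν+m) : ℝ) * (z-1)^m) ν]
    simp [add_comm]
  have e3 : ∑ m ∈ Finset.range (ν + 1), (Nat.choose (2*ν) (ν+m+1) : ℝ) * (z-1)^(m+1)
      = ∑ m ∈ Finset.range ν, (Nat.choose (2*ν) (ν+(m+1)) : ℝ) * (z-1)^(m+1) := by
    rw [Finset.sum_range_succ]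
    have : Nat.choose (2*ν) (ν+(ν+1)) = 0 := Nat.choose_eq_zero_of_lt (by omega)
    simp [this, Nat.add_assoc]
  linarith [e1, e2, e3]
section
variable (z : ℝ) (hz : 2 < z)

lemma Tp_mul (ν : ℕ) :
    Tp ν z * (z - 1) ^ ν
      = z ^ (2 * ν) - ∑ k ∈ Finset.range ν, (Nat.choose (2 * ν) k : ℝ) * (z - 1) ^ k := by
  have hpow : z ^ (2 * ν)
      = ∑ k ∈ Finset.range (2 * ν + 1), (z - 1) ^ k * (Nat.choose (2 * ν) k : ℝ) := by
    have h := add_pow (z - 1) 1 (2 * ν)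
    simpa using h
  have hsplit : ∑ k ∈ Finset.range (2 * ν + 1), (z - 1) ^ k * (Nat.choose (2 * ν) k : ℝ)
      = (∑ k ∈ Finset.range ν, (z - 1) ^ k * (Nat.choose (2 * ν) k : ℝ))
        + ∑ m ∈ Finset.range (ν + 1), (z - 1) ^ (ν + m) * (Nat.choose (2 * ν) (ν + m) : ℝ) := by
    have h2 : 2 * ν + 1 = ν + (ν + 1) := by omega
    rw [h2, Finset.sum_range_add]
  have hT : Tp ν z * (z - 1) ^ ν
      = ∑ m ∈ Finset.range (ν + 1), (z - 1) ^ (ν + m) * (Nat.choose (2 * ν) (ν + m) : ℝ) := by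
    unfold Tp
    rw [Finset.sum_mul]
    refine Finset.sum_congr rfl fun m hm => ?_
    rw [pow_add]; ring
  rw [hT, hpow, hsplit]
  have : ∀ k, (z - 1) ^ k * (Nat.choose (2 * ν) k : ℝ)
      = (Nat.choose (2 * ν) k : ℝ) * (z - 1) ^ k := fun k => mul_comm _ _
  simp only [this]
  ring

include hz

lemma Tp_upper (ν : ℕ) : Tp ν z ≤ (z ^ 2 / (z - 1)) ^ ν := by
  have ht : (0:ℝ) < z - 1 := by linarith
  have htp : (0:ℝ) < (z - 1) ^ ν := pow_pos ht ν
  rw [div_pow, ← pow_mul, le_div_iff₀ htp]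
  rw [Tp_mul]
  have : (0:ℝ) ≤ ∑ k ∈ Finset.range ν, (Nat.choose (2 * ν) k : ℝ) * (z - 1) ^ k := by
    apply Finset.sum_nonneg
    intro k _
    positivity
  linarith

lemma Tp_lower (ν : ℕ) : (z ^ 2 / (z - 1)) ^ ν - 4 ^ ν ≤ Tp ν z := by
  have ht : (0:ℝ) < z - 1 := by linarith
  have ht1 : (1:ℝ) ≤ z - 1 := by linarith
  have htp : (0:ℝ) < (z - 1) ^ ν := pow_pos ht ν
  rw [div_pow, ← pow_mul, sub_le_iff_le_add, div_le_iff₀ htp, add_mul, Tp_mul]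
  have hbound : ∑ k ∈ Finset.range ν, (Nat.choose (2 * ν) k : ℝ) * (z - 1) ^ k
      ≤ 4 ^ ν * (z - 1) ^ ν := by
    calc ∑ k ∈ Finset.range ν, (Nat.choose (2 * ν) k : ℝ) * (z - 1) ^ k
        ≤ ∑ k ∈ Finset.range ν, (Nat.choose (2 * ν) k : ℝ) * (z - 1) ^ ν := by
          apply Finset.sum_le_sum
          intro k hk
          have : (z - 1) ^ k ≤ (z - 1) ^ ν :=
            pow_le_pow_right₀ ht1 (le_of_lt (Finset.mem_range.mp hk))
          have hc : (0:ℝ) ≤ (Nat.choose (2 * ν) k : ℝ) := Nat.cast_nonneg _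
          nlinarith
      _ = (∑ k ∈ Finset.range ν, (Nat.choose (2 * ν) k : ℝ)) * (z - 1) ^ ν := by
          rw [Finset.sum_mul]
      _ ≤ 4 ^ ν * (z - 1) ^ ν := by
          have h4 : ∑ k ∈ Finset.range ν, (Nat.choose (2 * ν) k : ℝ) ≤ 4 ^ ν := by
            have hle : ∑ k ∈ Finset.range ν, Nat.choose (2 * ν) k ≤ 2 ^ (2 * ν) := by
              rw [← Nat.sum_range_choose (2 * ν)]
              apply Finset.sum_le_sum_of_subset
              apply Finset.range_subset_range.mpr; omega
            calc (∑ k ∈ Finset.range ν, (Nat.choose (2 * ν) k : ℝ))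
                = ((∑ k ∈ Finset.range ν, Nat.choose (2 * ν) k : ℕ) : ℝ) := by push_cast; ring
              _ ≤ ((2 ^ (2 * ν) : ℕ) : ℝ) := by exact_mod_cast hle
              _ = 4 ^ ν := by push_cast; rw [pow_mul]; norm_num
          nlinarith
  linarith
end
section
variable (z : ℝ) (hz : 2 < z)
include hz

lemma r_facts : 0 ≤ 4 * (z - 1) / z ^ 2 ∧ 4 * (z - 1) / z ^ 2 < 1 := by
  have hz0 : (0:ℝ) < z := by linarith
  have ht : (0:ℝ) < z - 1 := by linarith
  constructor
  · positivity
  · rw [div_lt_one (by positivity)]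
    nlinarith

lemma tendsto_Tp_div : Tendsto (fun ν : ℕ => Tp ν z / (z ^ 2 / (z - 1)) ^ ν)
    atTop (nhds 1) := by
  have ht : (0:ℝ) < z - 1 := by linarith
  have hlam : (0:ℝ) < z ^ 2 / (z - 1) := div_pos (by positivity) ht
  obtain ⟨hr0, hr1⟩ := r_facts z hz
  have hrconv : Tendsto (fun ν : ℕ => (1:ℝ) - (4 * (z - 1) / z ^ 2) ^ ν) atTop (nhds 1) := by
    have := tendsto_pow_atTop_nhds_zero_of_lt_one hr0 hr1
    simpa using (tendsto_const_nhds (x := (1:ℝ)) (f := atTop)).sub this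
  apply tendsto_of_tendsto_of_tendsto_of_le_of_le hrconv tendsto_const_nhds
  · intro ν
    have hlamn : (0:ℝ) < (z ^ 2 / (z - 1)) ^ ν := pow_pos hlam ν
    rw [sub_le_iff_le_add, div_add' _ _ _ (ne_of_gt hlamn), le_div_iff₀ hlamn]
    have hlow := Tp_lower z hz ν
    have hr : (4 * (z - 1) / z ^ 2) ^ ν * (z ^ 2 / (z - 1)) ^ ν = 4 ^ ν := by
      rw [← mul_pow]
      have : 4 * (z - 1) / z ^ 2 * (z ^ 2 / (z - 1)) = 4 := by
        field_simp
      rw [this]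
    nlinarith [hlow, hr]
  · intro ν
    have hlamn : (0:ℝ) < (z ^ 2 / (z - 1)) ^ ν := pow_pos hlam ν
    rw [div_le_one hlamn]
    exact Tp_upper z hz ν

lemma tendsto_choose_div :
    Tendsto (fun ν : ℕ => (Nat.choose (2 * ν) ν : ℝ) / (z ^ 2 / (z - 1)) ^ ν)
      atTop (nhds 0) := by
  have ht : (0:ℝ) < z - 1 := by linarith
  have hlam : (0:ℝ) < z ^ 2 / (z - 1) := div_pos (by positivity) ht
  obtain ⟨hr0, hr1⟩ := r_facts z hz
  have hrconv := tendsto_pow_atTop_nhds_zero_of_lt_one hr0 hr1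
  apply tendsto_of_tendsto_of_tendsto_of_le_of_le tendsto_const_nhds hrconv
  · intro ν
    exact div_nonneg (Nat.cast_nonneg _) (le_of_lt (pow_pos hlam ν))
  · intro ν
    have hlamn : (0:ℝ) < (z ^ 2 / (z - 1)) ^ ν := pow_pos hlam ν
    rw [div_le_iff₀ hlamn]
    have hc : (Nat.choose (2 * ν) ν : ℝ) ≤ 4 ^ ν := by
      have hle : Nat.choose (2 * ν) ν ≤ 2 ^ (2 * ν) := by
        rw [← Nat.sum_range_choose (2 * ν)]
        exact Finset.single_le_sum (f := fun k => Nat.choose (2 * ν) k)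
          (fun k _ => Nat.zero_le _) (Finset.mem_range.mpr (by omega))
      calc (Nat.choose (2 * ν) ν : ℝ) ≤ ((2 ^ (2 * ν) : ℕ) : ℝ) := by exact_mod_cast hle
        _ = 4 ^ ν := by push_cast; rw [pow_mul]; norm_num
    have hr : (4 * (z - 1) / z ^ 2) ^ ν * (z ^ 2 / (z - 1)) ^ ν = 4 ^ ν := by
      rw [← mul_pow]
      have : 4 * (z - 1) / z ^ 2 * (z ^ 2 / (z - 1)) = 4 := by
        field_simp
      rw [this]
    linarith

lemma tendsto_Dp_div : Tendsto (fun ν : ℕ => Dp ν z / (z ^ 2 / (z - 1)) ^ ν)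
    atTop (nhds ((z - 2) / (z - 1))) := by
  have ht : (0:ℝ) < z - 1 := by linarith
  have heq : ∀ ν : ℕ, Dp ν z / (z ^ 2 / (z - 1)) ^ ν
      = ((z - 2) * (Tp ν z / (z ^ 2 / (z - 1)) ^ ν)
          + (Nat.choose (2 * ν) ν : ℝ) / (z ^ 2 / (z - 1)) ^ ν) / (z - 1) := by
    intro ν
    have hk := key1 ν z
    have hlamn : ((z ^ 2 / (z - 1)) ^ ν : ℝ) ≠ 0 :=
      ne_of_gt (pow_pos (div_pos (by positivity) ht) ν)
    have hDp : Dp ν z = ((z - 2) * Tp ν z + (Nat.choose (2 * ν) ν : ℝ)) / (z - 1) := by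
      rw [eq_div_iff (ne_of_gt ht)]
      linarith [hk]
    rw [hDp]
    ring
  have : Tendsto (fun ν : ℕ =>
      ((z - 2) * (Tp ν z / (z ^ 2 / (z - 1)) ^ ν)
        + (Nat.choose (2 * ν) ν : ℝ) / (z ^ 2 / (z - 1)) ^ ν) / (z - 1))
      atTop (nhds (((z - 2) * 1 + 0) / (z - 1))) :=
    (((tendsto_Tp_div z hz).const_mul (z - 2)).add (tendsto_choose_div z hz)).div_const _
  have h2 : ((z - 2) * 1 + 0) / (z - 1) = (z - 2) / (z - 1) := by ring
  rw [h2] at this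
  exact this.congr (fun ν => (heq ν).symm)
end

/-- For `z > 2` and `a ∈ (0,1)`, the pressure of an adsorbing Dyck path at the point
`2⌊an/2⌋` tends, as `n → ∞` through even values `n = 2ν`, to `−log(z−1)`. -/
theorem dyck_pressure_adsorbed (z : ℝ) (hz : 2 < z) (a : ℝ) (ha0 : 0 < a) (ha1 : a < 1) :
    Tendsto (fun ν : ℕ => PD ν ⌊a * (ν : ℝ)⌋₊ z) atTop (nhds (-Real.log (z - 1))) := by
  have ht : (0:ℝ) < z - 1 := by linarith
  have hlam : (0:ℝ) < z ^ 2 / (z - 1) := div_pos (by positivity) ht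
  set A : ℝ := (z - 2) / (z - 1) with hAdef
  have hApos : 0 < A := div_pos (by linarith) ht
  set g : ℕ → ℝ := fun ν => Dp ν z / (z ^ 2 / (z - 1)) ^ ν with hgdef
  have hg : Tendsto g atTop (nhds A) := tendsto_Dp_div z hz
  set κ : ℕ → ℕ := fun ν => ⌊a * (ν : ℝ)⌋₊ with hκdef
  have hκle : ∀ ν, κ ν ≤ ν := by
    intro ν
    have h1 : a * ν ≤ (ν : ℝ) := by nlinarith [Nat.cast_nonneg (α := ℝ) ν]
    calc κ ν ≤ ⌊(ν:ℝ)⌋₊ := Nat.floor_le_floor h1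
      _ = ν := Nat.floor_natCast ν
  have hκtop : Tendsto κ atTop atTop := by
    apply tendsto_nat_floor_atTop.comp
    exact Tendsto.const_mul_atTop ha0 tendsto_natCast_atTop_atTop
  have hsub : Tendsto (fun ν => ν - κ ν) atTop atTop := by
    rw [tendsto_atTop]
    intro b
    have h1 : Tendsto (fun ν : ℕ => (1 - a) * ν) atTop atTop :=
      Tendsto.const_mul_atTop (by linarith) tendsto_natCast_atTop_atTop
    filter_upwards [h1.eventually_ge_atTop (b : ℝ)] with ν hν
    have hfl : (κ ν : ℝ) ≤ a * ν := Nat.floor_le (by positivity)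
    have hbr : (b : ℝ) + (κ ν : ℝ) ≤ (ν : ℝ) := by linarith
    have hb : b + κ ν ≤ ν := by exact_mod_cast hbr
    omega
  have h1 : Tendsto (fun ν => g (κ ν)) atTop (nhds A) := hg.comp hκtop
  have h2 : Tendsto (fun ν => g (ν - κ ν)) atTop (nhds A) := hg.comp hsub
  have hquot : Tendsto (fun ν => g (κ ν) * g (ν - κ ν) / g ν) atTop (nhds A) := by
    have h3 := (h1.mul h2).div hg (ne_of_gt hApos)
    have h4 : A * A / A = A := by field_simp
    rw [h4] at h3
    exact h3
  have heq : ∀ ν, Dp (κ ν) z * Dp (ν - κ ν) z / Dp ν z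
      = g (κ ν) * g (ν - κ ν) / g ν := by
    intro ν
    have hln : ((z ^ 2 / (z - 1)) : ℝ) ^ ν ≠ 0 := ne_of_gt (pow_pos hlam ν)
    have hD : ∀ m : ℕ, Dp m z = g m * (z ^ 2 / (z - 1)) ^ m := by
      intro m
      rw [hgdef]
      field_simp
    rw [hD, hD, hD]
    have hpow : ((z ^ 2 / (z - 1)) : ℝ) ^ κ ν * (z ^ 2 / (z - 1)) ^ (ν - κ ν)
        = (z ^ 2 / (z - 1)) ^ ν := by
      rw [← pow_add, Nat.add_sub_cancel' (hκle ν)]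
    calc g (κ ν) * (z ^ 2 / (z - 1)) ^ κ ν
          * (g (ν - κ ν) * (z ^ 2 / (z - 1)) ^ (ν - κ ν)) / (g ν * (z ^ 2 / (z - 1)) ^ ν)
        = g (κ ν) * g (ν - κ ν) * (z ^ 2 / (z - 1)) ^ ν
            / (g ν * (z ^ 2 / (z - 1)) ^ ν) := by rw [← hpow]; ring_nf
      _ = g (κ ν) * g (ν - κ ν) / g ν := mul_div_mul_right _ _ hln
  have hinner : Tendsto (fun ν => 1 - Dp (κ ν) z * Dp (ν - κ ν) z / Dp ν z) atTop
      (nhds (1 - A)) := by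
    have h5 := (tendsto_const_nhds (x := (1:ℝ)) (f := (atTop : Filter ℕ))).sub hquot
    exact h5.congr (fun ν => by rw [heq ν])
  have h1A : 1 - A = 1 / (z - 1) := by
    rw [hAdef]; field_simp; norm_num
  have hne : (1:ℝ) - A ≠ 0 := by rw [h1A]; positivity
  have hlog := hinner.log hne
  have hval : Real.log (1 - A) = -Real.log (z - 1) := by
    rw [h1A, one_div, Real.log_inv]
  rw [hval] at hlog
  exact hlog.congr (fun ν => by rw [PD])
end

section
/- For every real z > 2, lim_{ν→∞} T_{2ν}(z)·((z−1)/z²)^ν = 1; equivalently, T_{2ν}(z) = (z²/(z−1))^ν·(1+o(1)) as ν → ∞. -/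
open Filter Real

/-- For `z > 2`, `T_{2ν}(z)·((z−1)/z²)^ν → 1` as `ν → ∞`. -/
theorem directed_partition_asymptotics (z : ℝ) (hz : 2 < z) :
    Tendsto (fun ν : ℕ => Tp ν z * ((z - 1) / z ^ 2) ^ ν) atTop (nhds 1) := by
  have ht : (1 : ℝ) < z - 1 := by linarith
  have ht0 : (0 : ℝ) < z - 1 := by linarith
  have hz0 : (0 : ℝ) < z := by linarith
  set t : ℝ := z - 1 with htdef
  set S : ℕ → ℝ := fun ν => ∑ k ∈ Finset.range ν, (Nat.choose (2 * ν) k : ℝ) * t ^ k with hS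
  have key : ∀ ν : ℕ, Tp ν z * t ^ ν + S ν = z ^ (2 * ν) := by
    intro ν
    have h1 : z ^ (2 * ν) = ∑ k ∈ Finset.range (2 * ν + 1),
        t ^ k * (Nat.choose (2 * ν) k : ℝ) := by
      have h := add_pow t 1 (2 * ν)
      have ht1 : t + 1 = z := by simp [htdef]
      rw [ht1] at h
      simpa using h
    have h2 : Tp ν z * t ^ ν = ∑ k ∈ Finset.Ico ν (2 * ν + 1),
        t ^ k * (Nat.choose (2 * ν) k : ℝ) := by
      rw [Finset.sum_Ico_eq_sum_range]
      have hν : 2 * ν + 1 - ν = ν + 1 := by omega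
      rw [hν, Tp, Finset.sum_mul]
      refine Finset.sum_congr rfl fun m _ => ?_
      rw [pow_add]; ring
    have h3 : S ν = ∑ k ∈ Finset.range ν, t ^ k * (Nat.choose (2 * ν) k : ℝ) := by
      refine Finset.sum_congr rfl fun k _ => by ring
    rw [h1, h2, h3]
    rw [← Finset.sum_range_add_sum_Ico _ (by omega : ν ≤ 2 * ν + 1)]
    ring
  have hzpow : ∀ ν : ℕ, (0 : ℝ) < z ^ (2 * ν) := fun ν => pow_pos hz0 _
  have hexpr : ∀ ν : ℕ, Tp ν z * ((z - 1) / z ^ 2) ^ ν = 1 - S ν / z ^ (2 * ν) := by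
    intro ν
    have h := key ν
    have hzne : z ^ (2 * ν) ≠ 0 := (hzpow ν).ne'
    have hpow : ((z - 1) / z ^ 2) ^ ν = t ^ ν / z ^ (2 * ν) := by
      rw [div_pow, ← pow_mul]
    rw [hpow]
    field_simp
    linarith [key ν]
  have hS0 : Tendsto (fun ν : ℕ => S ν / z ^ (2 * ν)) atTop (nhds 0) := by
    have hr0 : (0 : ℝ) ≤ 4 * t / z ^ 2 := by positivity
    have hr1 : 4 * t / z ^ 2 < 1 := by
      rw [div_lt_one (by positivity)]
      nlinarith [sq_nonneg (t - 1)]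
    have hgeo : Tendsto (fun ν : ℕ => (4 * t / z ^ 2) ^ ν) atTop (nhds 0) :=
      tendsto_pow_atTop_nhds_zero_of_lt_one hr0 hr1
    refine squeeze_zero (fun ν => ?_) (fun ν => ?_) hgeo
    · apply div_nonneg _ (hzpow ν).le
      exact Finset.sum_nonneg fun k _ => by positivity
    · rw [div_le_iff₀ (hzpow ν)]
      have h1 : S ν ≤ 4 ^ ν * t ^ ν := by
        calc S ν ≤ ∑ k ∈ Finset.range ν, (Nat.choose (2 * ν) k : ℝ) * t ^ ν := by
              refine Finset.sum_le_sum fun k hk => ?_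
              have hk' : k ≤ ν := (Finset.mem_range.mp hk).le
              have : t ^ k ≤ t ^ ν := pow_le_pow_right₀ ht.le hk'
              have hc : (0 : ℝ) ≤ (Nat.choose (2 * ν) k : ℝ) := Nat.cast_nonneg _
              nlinarith
          _ = (∑ k ∈ Finset.range ν, (Nat.choose (2 * ν) k : ℝ)) * t ^ ν := by
              rw [Finset.sum_mul]
          _ ≤ 4 ^ ν * t ^ ν := by
              refine mul_le_mul_of_nonneg_right ?_ (by positivity)
              have h2 : ∑ k ∈ Finset.range ν, (Nat.choose (2 * ν) k : ℝ)
                  ≤ ∑ k ∈ Finset.range (2 * ν + 1), (Nat.choose (2 * ν) k : ℝ) := by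
                refine Finset.sum_le_sum_of_subset_of_nonneg
                  (Finset.range_subset_range.mpr (by omega)) fun k _ _ => Nat.cast_nonneg _
              have h3 : ∑ k ∈ Finset.range (2 * ν + 1), (Nat.choose (2 * ν) k : ℝ)
                  = 4 ^ ν := by
                rw [← Nat.cast_sum]
                rw [Nat.sum_range_choose]
                push_cast
                rw [pow_mul]
                norm_num
              linarith
      have h4 : (4 * t / z ^ 2) ^ ν * z ^ (2 * ν) = 4 ^ ν * t ^ ν := by
        rw [div_pow, mul_pow, mul_comm 2 ν, pow_mul]
        field_simp
        ring
      rw [h4]; exact h1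
  have := (tendsto_const_nhds (x := (1:ℝ)) (f := atTop)).sub hS0
  simp only [sub_zero] at this
  exact Tendsto.congr (fun ν => (hexpr ν).symm) this
end

section
/- Let a ∈ (0,1). For Dyck paths without adsorption interaction, the residual rescaled pressure in the scaling limit is lim_{n→∞} n^{3/2}·P_{2n}^D(2⌊an⌋) = −1/√(π·a³·(1−a)³), where P_{2n}^D(2N) = log(1 − catalan(N)·catalan(n−N)/catalan(n)). -/
open Filter Real Topology

namespace DyckAux
open Stirling Nat

lemma catalan_pos' (n : ℕ) : 0 < catalan n := by
  rcases Nat.eq_zero_or_pos (catalan n) with h | h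
  · exfalso
    have h2 := succ_mul_catalan_eq_centralBinom n
    rw [h, mul_zero] at h2
    exact (Nat.centralBinom_pos n).ne' h2.symm
  · exact h

lemma cb_eq (n : ℕ) (hn : 1 ≤ n) :
    (Nat.centralBinom n : ℝ) * Real.sqrt n / 4 ^ n
      = stirlingSeq (2 * n) / (stirlingSeq n * stirlingSeq n) := by
  have hfact : ((Nat.centralBinom n : ℝ)) * (n ! : ℝ) * (n ! : ℝ) = ((2*n)! : ℝ) := by
    rw [← Nat.cast_mul, ← Nat.cast_mul]
    norm_cast
    have := Nat.choose_mul_factorial_mul_factorial (Nat.le_mul_of_pos_left n two_pos)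
    simpa [Nat.centralBinom, two_mul, Nat.add_sub_cancel] using this
  have hn0 : (0:ℝ) < n := by exact_mod_cast hn
  have hfac0 : (0:ℝ) < (n ! : ℝ) := by exact_mod_cast n.factorial_pos
  rw [stirlingSeq, stirlingSeq]
  have h4 : Real.sqrt (2 * (2*n:ℕ)) = 2 * Real.sqrt n := by
    push_cast
    rw [show (2*(2*(n:ℝ))) = 2^2 * n by ring, Real.sqrt_mul (by positivity),
      Real.sqrt_sq (by norm_num)]
  have hpow : (((2*n:ℕ):ℝ) / Real.exp 1) ^ (2*n) = 4^n * (((n:ℝ)/Real.exp 1)^n)^2 := by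
    push_cast
    rw [show (2*(n:ℝ)/Real.exp 1) = 2 * ((n:ℝ)/Real.exp 1) by ring, mul_pow, ← pow_mul,
      pow_mul 2 2 n]
    ring
  rw [h4, hpow]
  set E : ℝ := ((n:ℝ)/Real.exp 1)^n with hE
  have hEne : E ≠ 0 := by rw [hE]; positivity
  set S : ℝ := Real.sqrt n with hSdef
  have hS : S * S = (n:ℝ) := Real.mul_self_sqrt (by positivity)
  have hSpos : 0 < S := Real.sqrt_pos.2 hn0
  set T : ℝ := Real.sqrt (2*(n:ℝ)) with hTdef
  have hT : T * T = 2*(n:ℝ) := Real.mul_self_sqrt (by positivity)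
  have hTpos : 0 < T := Real.sqrt_pos.2 (by positivity)
  rw [div_eq_div_iff (by positivity) (by positivity)]
  field_simp
  linear_combination
    (2 * (Nat.centralBinom n : ℝ) * (n ! : ℝ)^2) * hS
    - (((2*n)! : ℝ)) * hT
    + (2 * (n:ℝ)) * hfact

lemma cb_lim : Tendsto (fun n : ℕ => (Nat.centralBinom n : ℝ) * Real.sqrt n / 4 ^ n)
    atTop (𝓝 (1 / Real.sqrt π)) := by
  have hs := Stirling.tendsto_stirlingSeq_sqrt_pi
  have h2 : Tendsto (fun n : ℕ => 2 * n) atTop atTop :=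
    tendsto_atTop_mono (fun n => by simp; omega) tendsto_id
  have hsp : (0:ℝ) < Real.sqrt π := Real.sqrt_pos.2 Real.pi_pos
  have hlim : Tendsto (fun n : ℕ => stirlingSeq (2*n) / (stirlingSeq n * stirlingSeq n))
      atTop (𝓝 (Real.sqrt π / (Real.sqrt π * Real.sqrt π))) :=
    (hs.comp h2).div (hs.mul hs) (by positivity)
  have hval : Real.sqrt π / (Real.sqrt π * Real.sqrt π) = 1 / Real.sqrt π := by
    field_simp
  rw [hval] at hlim
  apply hlim.congr'
  filter_upwards [eventually_ge_atTop 1] with n hn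
  exact (cb_eq n hn).symm

noncomputable def cseq (n : ℕ) : ℝ := (catalan n : ℝ) * (n : ℝ) ^ ((3:ℝ)/2) / 4 ^ n

lemma cseq_lim : Tendsto cseq atTop (𝓝 (1 / Real.sqrt π)) := by
  have h0 : Tendsto (fun n : ℕ => 1 / ((n:ℝ)+1)) atTop (𝓝 0) :=
    tendsto_one_div_add_atTop_nhds_zero_nat
  have h1 : Tendsto (fun n : ℕ => (n:ℝ) / ((n:ℝ)+1)) atTop (𝓝 1) := by
    have h2 : Tendsto (fun n : ℕ => 1 - 1/((n:ℝ)+1)) atTop (𝓝 (1 - 0)) :=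
      tendsto_const_nhds.sub h0
    rw [sub_zero] at h2
    apply h2.congr
    intro n
    have hne : ((n:ℝ)+1) ≠ 0 := by positivity
    field_simp
    ring
  have hmul := cb_lim.mul h1
  rw [mul_one] at hmul
  apply hmul.congr'
  filter_upwards [eventually_ge_atTop 1] with n hn
  have hn0 : (0:ℝ) < n := by exact_mod_cast hn
  have hcat : ((n:ℝ)+1) * (catalan n : ℝ) = (Nat.centralBinom n : ℝ) := by
    exact_mod_cast succ_mul_catalan_eq_centralBinom n
  have hr : (n:ℝ) ^ ((3:ℝ)/2) = n * Real.sqrt n := by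
    rw [show (3:ℝ)/2 = 1 + 1/2 by norm_num, Real.rpow_add hn0, Real.rpow_one,
      ← Real.sqrt_eq_rpow]
  rw [cseq, hr, ← hcat]
  have h4 : ((4:ℝ))^n ≠ 0 := by positivity
  have hne : ((n:ℝ)+1) ≠ 0 := by positivity
  field_simp

end DyckAux

open DyckAux in
/-- Residual rescaled pressure of Dyck paths without adsorption interaction:
`lim_{n→∞} n^{3/2}·P_{2n}^D(2⌊an⌋) = −1/√(π·a³·(1−a)³)`, where
`P_{2n}^D(2N) = log(1 − catalan(N)·catalan(n−N)/catalan(n))`. -/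
theorem dyck_rescaled_pressure (a : ℝ) (ha0 : 0 < a) (ha1 : a < 1) :
    Tendsto (fun n : ℕ => (n : ℝ) ^ ((3 : ℝ) / 2) *
        Real.log (1 - (catalan ⌊a * (n : ℝ)⌋₊ : ℝ) * (catalan (n - ⌊a * (n : ℝ)⌋₊)) /
          (catalan n)))
      atTop (nhds (-(1 / Real.sqrt (π * a ^ 3 * (1 - a) ^ 3)))) := by
  have hsp : (0:ℝ) < Real.sqrt π := Real.sqrt_pos.2 Real.pi_pos
  have ha1' : (0:ℝ) < 1 - a := by linarith
  set N : ℕ → ℕ := fun n => ⌊a * (n:ℝ)⌋₊ with hNdef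
  set r : ℕ → ℝ := fun n =>
    (catalan (N n) : ℝ) * (catalan (n - N n)) / (catalan n) with hrdef
  set L : ℝ := 1 / Real.sqrt (π * a ^ 3 * (1 - a) ^ 3) with hLdef
  have hNle : ∀ n : ℕ, 1 ≤ n → N n < n := by
    intro n hn
    have hn0 : (0:ℝ) < n := by exact_mod_cast hn
    have : a * n < n := by nlinarith
    exact (Nat.floor_lt (by positivity)).2 this
  have hNtop : Tendsto N atTop atTop := tendsto_nat_floor_mul_atTop a ha0
  have hN1ev : ∀ᶠ n in atTop, 1 ≤ N n := hNtop.eventually_ge_atTop 1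
  have hMcast : ∀ n : ℕ, 1 ≤ n → ((n - N n : ℕ) : ℝ) = (n:ℝ) - (N n : ℝ) := by
    intro n hn
    exact_mod_cast Nat.cast_sub (hNle n hn).le
  have hMtop : Tendsto (fun n => n - N n) atTop atTop := by
    rw [← tendsto_natCast_atTop_iff (R := ℝ)]
    apply tendsto_atTop_mono' _ _ (Tendsto.const_mul_atTop ha1' tendsto_natCast_atTop_atTop)
    filter_upwards [eventually_ge_atTop 1] with n hn
    have hn0 : (0:ℝ) ≤ (n:ℝ) := by positivity
    have hfl : (N n : ℝ) ≤ a * n := Nat.floor_le (by positivity)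
    rw [hMcast n hn]
    nlinarith
  have hNdiv : Tendsto (fun n : ℕ => (N n : ℝ)/n) atTop (𝓝 a) :=
    (tendsto_nat_floor_mul_div_atTop ha0.le).comp tendsto_natCast_atTop_atTop
  have hMdiv : Tendsto (fun n : ℕ => ((n - N n : ℕ) : ℝ)/n) atTop (𝓝 (1 - a)) := by
    have h1 : Tendsto (fun n : ℕ => 1 - (N n:ℝ)/n) atTop (𝓝 (1-a)) :=
      tendsto_const_nhds.sub hNdiv
    apply h1.congr'
    filter_upwards [eventually_ge_atTop 1] with n hn
    have hn0 : (0:ℝ) < n := by exact_mod_cast hn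
    rw [hMcast n hn]
    field_simp
  have hnN : Tendsto (fun n : ℕ => (n:ℝ)/(N n)) atTop (𝓝 a⁻¹) := by
    have h := hNdiv.inv₀ (ne_of_gt ha0)
    apply h.congr'
    filter_upwards [hN1ev, eventually_ge_atTop 1] with n h1 h2
    rw [inv_div]
  have hnM : Tendsto (fun n : ℕ => (n:ℝ)/((n - N n : ℕ):ℝ)) atTop (𝓝 (1-a)⁻¹) := by
    have h := hMdiv.inv₀ (ne_of_gt ha1')
    apply h.congr'
    filter_upwards [hMtop.eventually_ge_atTop 1, eventually_ge_atTop 1] with n h1 h2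
    rw [inv_div]
  have hcN : Tendsto (fun n => cseq (N n)) atTop (𝓝 (1/Real.sqrt π)) := cseq_lim.comp hNtop
  have hcM : Tendsto (fun n => cseq (n - N n)) atTop (𝓝 (1/Real.sqrt π)) := cseq_lim.comp hMtop
  have hratio : Tendsto (fun n => cseq (N n) * cseq (n - N n) / cseq n) atTop
      (𝓝 (1/Real.sqrt π * (1/Real.sqrt π) / (1/Real.sqrt π))) :=
    (hcN.mul hcM).div cseq_lim (by positivity)
  have hA : Tendsto (fun n : ℕ => ((n:ℝ)/(N n)) ^ ((3:ℝ)/2)) atTop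
      (𝓝 (a⁻¹ ^ ((3:ℝ)/2))) := hnN.rpow_const (Or.inr (by norm_num))
  have hB : Tendsto (fun n : ℕ => ((n:ℝ)/((n - N n : ℕ):ℝ)) ^ ((3:ℝ)/2)) atTop
      (𝓝 ((1-a)⁻¹ ^ ((3:ℝ)/2))) := hnM.rpow_const (Or.inr (by norm_num))
  have hfull : Tendsto (fun n : ℕ =>
      cseq (N n) * cseq (n - N n) / cseq n * ((n:ℝ)/(N n)) ^ ((3:ℝ)/2)
        * ((n:ℝ)/((n - N n : ℕ):ℝ)) ^ ((3:ℝ)/2)) atTop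
      (𝓝 (1/Real.sqrt π * (1/Real.sqrt π) / (1/Real.sqrt π) * a⁻¹ ^ ((3:ℝ)/2)
        * (1-a)⁻¹ ^ ((3:ℝ)/2))) := (hratio.mul hA).mul hB
  have key : ∀ x : ℝ, 0 ≤ x → Real.sqrt (x^3) = x ^ ((3:ℝ)/2) := by
    intro x hx
    rw [Real.sqrt_eq_rpow, ← Real.rpow_natCast x 3, ← Real.rpow_mul hx]
    norm_num
  have hval : 1/Real.sqrt π * (1/Real.sqrt π) / (1/Real.sqrt π) * a⁻¹ ^ ((3:ℝ)/2)
      * (1-a)⁻¹ ^ ((3:ℝ)/2) = L := by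
    have hsq : Real.sqrt (π * a ^ 3 * (1 - a) ^ 3)
        = Real.sqrt π * a ^ ((3:ℝ)/2) * (1-a) ^ ((3:ℝ)/2) := by
      rw [Real.sqrt_mul (by positivity), Real.sqrt_mul Real.pi_pos.le,
        key a ha0.le, key (1-a) ha1'.le]
    have h1 : 1/Real.sqrt π * (1/Real.sqrt π) / (1/Real.sqrt π) = 1/Real.sqrt π := by
      field_simp
    have hpa : (0:ℝ) < a ^ ((3:ℝ)/2) := Real.rpow_pos_of_pos ha0 _
    have hpb : (0:ℝ) < (1-a) ^ ((3:ℝ)/2) := Real.rpow_pos_of_pos ha1' _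
    rw [h1, Real.inv_rpow ha0.le, Real.inv_rpow ha1'.le, hLdef, hsq]
    field_simp
  rw [hval] at hfull
  have heq : ∀ᶠ n : ℕ in atTop, (n:ℝ)^((3:ℝ)/2) * r n =
      cseq (N n) * cseq (n - N n) / cseq n * ((n:ℝ)/(N n)) ^ ((3:ℝ)/2)
        * ((n:ℝ)/((n - N n : ℕ):ℝ)) ^ ((3:ℝ)/2) := by
    filter_upwards [hN1ev, eventually_ge_atTop 1] with n h1 h2
    have hKn : N n < n := hNle n h2
    have hKM : N n + (n - N n) = n := by omega
    have hK0 : (0:ℝ) < (N n : ℝ) := by exact_mod_cast h1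
    have hM0 : (0:ℝ) < ((n - N n : ℕ) : ℝ) := by
      have : 0 < n - N n := by omega
      exact_mod_cast this
    have hn0 : (0:ℝ) < (n:ℝ) := by exact_mod_cast h2
    have hcatK : (0:ℝ) < (catalan (N n) : ℝ) := by exact_mod_cast catalan_pos' (N n)
    have hcatM : (0:ℝ) < (catalan (n - N n) : ℝ) := by exact_mod_cast catalan_pos' (n - N n)
    have hcatn : (0:ℝ) < (catalan n : ℝ) := by exact_mod_cast catalan_pos' n
    have hxK : (0:ℝ) < (N n : ℝ) ^ ((3:ℝ)/2) := Real.rpow_pos_of_pos hK0 _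
    have hxM : (0:ℝ) < ((n - N n : ℕ) : ℝ) ^ ((3:ℝ)/2) := Real.rpow_pos_of_pos hM0 _
    have hxn : (0:ℝ) < (n:ℝ) ^ ((3:ℝ)/2) := Real.rpow_pos_of_pos hn0 _
    have h4n : ((4:ℝ))^n = 4 ^ (N n) * 4 ^ (n - N n) := by rw [← pow_add, hKM]
    show (n:ℝ)^((3:ℝ)/2) *
        ((catalan (N n) : ℝ) * (catalan (n - N n)) / (catalan n)) = _
    simp only [cseq]
    rw [Real.div_rpow hn0.le hK0.le, Real.div_rpow hn0.le hM0.le, h4n]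
    have h4K : ((4:ℝ))^(N n) ≠ 0 := by positivity
    have h4M : ((4:ℝ))^(n - N n) ≠ 0 := by positivity
    field_simp
  have hmain : Tendsto (fun n : ℕ => (n:ℝ)^((3:ℝ)/2) * r n) atTop (𝓝 L) :=
    Tendsto.congr' (heq.mono fun n h => h.symm) hfull
  have hrpos : ∀ n, 0 < r n := by
    intro n
    have h1 : (0:ℝ) < (catalan (N n) : ℝ) := by exact_mod_cast catalan_pos' (N n)
    have h2 : (0:ℝ) < (catalan (n - N n) : ℝ) := by exact_mod_cast catalan_pos' (n - N n)
    have h3 : (0:ℝ) < (catalan n : ℝ) := by exact_mod_cast catalan_pos' n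
    exact div_pos (mul_pos h1 h2) h3
  have hinv : Tendsto (fun n : ℕ => ((n:ℝ)^((3:ℝ)/2))⁻¹) atTop (𝓝 0) := by
    apply Tendsto.inv_tendsto_atTop
    exact (tendsto_rpow_atTop (by norm_num)).comp tendsto_natCast_atTop_atTop
  have hr0 : Tendsto r atTop (𝓝 0) := by
    have h := hmain.mul hinv
    rw [mul_zero] at h
    apply h.congr'
    filter_upwards [eventually_ge_atTop 1] with n hn
    have hn0 : (0:ℝ) < n := by exact_mod_cast hn
    have hne : (n:ℝ)^((3:ℝ)/2) ≠ 0 := (Real.rpow_pos_of_pos hn0 _).ne'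
    rw [mul_comm ((n:ℝ)^((3:ℝ)/2)) (r n), mul_assoc, mul_inv_cancel₀ hne, mul_one]
  have hderiv : HasDerivAt (fun x : ℝ => Real.log (1 - x)) (-1) 0 := by
    have h1 : HasDerivAt (fun x : ℝ => 1 - x) (-1) 0 := (hasDerivAt_id 0).const_sub 1
    have h2 := h1.log (by norm_num)
    simpa using h2
  have hslope : Tendsto (fun x : ℝ => Real.log (1 - x)/x) (𝓝[≠] 0) (𝓝 (-1)) := by
    have h := hasDerivAt_iff_tendsto_slope.mp hderiv
    apply h.congr
    intro x
    simp [slope_fun_def, Real.log_one]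
    ring
  have hrne : Tendsto r atTop (𝓝[≠] 0) := by
    apply tendsto_nhdsWithin_of_tendsto_nhds_of_eventually_within _ hr0
    filter_upwards with n
    exact Set.mem_compl_singleton_iff.mpr (hrpos n).ne'
  have hcomp : Tendsto (fun n => Real.log (1 - r n)/(r n)) atTop (𝓝 (-1)) :=
    hslope.comp hrne
  have hfin := hmain.mul hcomp
  have hLval : L * (-1) = -(1 / Real.sqrt (π * a ^ 3 * (1 - a) ^ 3)) := by
    rw [hLdef]; ring
  rw [hLval] at hfin
  apply hfin.congr'
  filter_upwards with n
  have hne : r n ≠ 0 := (hrpos n).ne'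
  show ((n:ℝ)^((3:ℝ)/2) * r n) * (Real.log (1 - r n)/(r n))
      = (n:ℝ)^((3:ℝ)/2) * Real.log (1 - r n)
  field_simp
end

section
/- Let a ∈ (0,1). For positive directed paths without adsorption interaction, the residual rescaled pressure in the scaling limit is lim_{n→∞} n^{3/2}·P_{2n}^T(2⌊an⌋) = −1/√(π·a³·(1−a)), where P_{2n}^T(2N) = log(1 − catalan(N)·C(2(n−N), n−N)/C(2n, n)). -/
open Filter Real Topology

private lemma cb_eq (n : ℕ) (hn : 1 ≤ n) :
    (Nat.centralBinom n : ℝ) * Real.sqrt n / 4 ^ n =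
      Stirling.stirlingSeq (2 * n) / (Stirling.stirlingSeq n) ^ 2 := by
  have hn' : (0:ℝ) < n := by exact_mod_cast hn
  have hcb : (Nat.centralBinom n : ℝ) =
      (Nat.factorial (2*n) : ℝ) / (Nat.factorial n * Nat.factorial n) := by
    rw [Nat.centralBinom, Nat.cast_choose ℝ (by omega : n ≤ 2*n),
      show 2*n - n = n by omega]
  have hsq : Real.sqrt (2 * ((2*n : ℕ):ℝ)) = 2 * Real.sqrt n := by
    push_cast
    rw [show (2*(2*(n:ℝ))) = (2:ℝ)^2 * n by ring, Real.sqrt_mul (by positivity),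
      Real.sqrt_sq (by norm_num)]
  have hpow : (((2*n : ℕ) : ℝ) / Real.exp 1) ^ (2*n) = 4^n * (((n:ℝ)/Real.exp 1)^n)^2 := by
    push_cast
    rw [show (2*(n:ℝ))/Real.exp 1 = 2 * ((n:ℝ)/Real.exp 1) by ring, mul_pow,
      show (4:ℝ) = 2^2 by norm_num, ← pow_mul, ← pow_mul]
    ring_nf
  have hs2 : Real.sqrt (2 * (n:ℝ)) = Real.sqrt 2 * Real.sqrt n := by
    rw [Real.sqrt_mul (by norm_num)]
  have hx : Real.sqrt (n:ℝ) ≠ 0 := by positivity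
  have hy : ((n:ℝ)/Real.exp 1)^n ≠ 0 := by positivity
  have hf : (Nat.factorial n : ℝ) ≠ 0 := by exact_mod_cast n.factorial_ne_zero
  have h2 : Real.sqrt 2 ≠ 0 := by positivity
  rw [Stirling.stirlingSeq, Stirling.stirlingSeq, hcb, hsq, hpow, hs2]
  have hs22 : Real.sqrt 2 ^ 2 = 2 := Real.sq_sqrt (by norm_num)
  field_simp
  ring_nf
  rw [hs22]

private lemma cb_lim : Tendsto (fun n : ℕ => (Nat.centralBinom n : ℝ) * Real.sqrt n / 4 ^ n)
    atTop (𝓝 (1 / Real.sqrt π)) := by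
  have hpi : Real.sqrt π ≠ 0 := by positivity
  have h2 : Tendsto (fun n : ℕ => 2 * n) atTop atTop :=
    tendsto_id.const_mul_atTop' two_pos
  have hA : Tendsto (fun n : ℕ => Stirling.stirlingSeq (2 * n) / (Stirling.stirlingSeq n) ^ 2)
      atTop (𝓝 (Real.sqrt π / (Real.sqrt π) ^ 2)) :=
    (Stirling.tendsto_stirlingSeq_sqrt_pi.comp h2).div
      (Stirling.tendsto_stirlingSeq_sqrt_pi.pow 2) (by positivity)
  have hval : Real.sqrt π / (Real.sqrt π) ^ 2 = 1 / Real.sqrt π := by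
    rw [sq]; field_simp
  rw [← hval]
  apply hA.congr'
  filter_upwards [eventually_ge_atTop 1] with n hn
  exact (cb_eq n hn).symm

private lemma cat_pos (n : ℕ) : 0 < catalan n := by
  have h : 0 < (n+1) * catalan n := by
    rw [succ_mul_catalan_eq_centralBinom]; exact Nat.centralBinom_pos n
  rcases Nat.eq_zero_or_pos (catalan n) with h0 | h0
  · simp [h0] at h
  · exact h0

/-- Residual rescaled pressure of positive directed paths without adsorption interaction:
`lim_{n→∞} n^{3/2}·P_{2n}^T(2⌊an⌋) = −1/√(π·a³·(1−a))`, where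
`P_{2n}^T(2N) = log(1 − catalan(N)·C(2(n−N), n−N)/C(2n, n))`. -/
theorem directed_rescaled_pressure (a : ℝ) (ha0 : 0 < a) (ha1 : a < 1) :
    Tendsto (fun n : ℕ => (n : ℝ) ^ ((3 : ℝ) / 2) *
        Real.log (1 - (catalan ⌊a * (n : ℝ)⌋₊ : ℝ) *
          (Nat.choose (2 * (n - ⌊a * (n : ℝ)⌋₊)) (n - ⌊a * (n : ℝ)⌋₊)) /
          (Nat.choose (2 * n) n)))
      atTop (nhds (-(1 / Real.sqrt (π * a ^ 3 * (1 - a))))) := by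
  have hπ : (0:ℝ) < π := Real.pi_pos
  set N : ℕ → ℕ := fun n => ⌊a * (n:ℝ)⌋₊ with hNdef
  set x : ℕ → ℝ := fun n => (catalan (N n) : ℝ) *
      (Nat.choose (2 * (n - N n)) (n - N n) : ℝ) / (Nat.choose (2*n) n : ℝ) with hxdef
  have hNa : ∀ n : ℕ, (N n : ℝ) ≤ a * n := fun n => Nat.floor_le (by positivity)
  have hNtop : Tendsto N atTop atTop := tendsto_nat_floor_mul_atTop a ha0
  have hNdiv : Tendsto (fun n : ℕ => (N n : ℝ) / n) atTop (𝓝 a) := by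
    have := (tendsto_nat_floor_mul_div_atTop (R := ℝ) ha0.le).comp tendsto_natCast_atTop_atTop
    exact this
  have hlt : ∀ᶠ n in atTop, N n < n := by
    filter_upwards [eventually_ge_atTop 1] with n hn
    have h1 : (1:ℝ) ≤ n := by exact_mod_cast hn
    have : (N n : ℝ) < n := (hNa n).trans_lt (by nlinarith)
    exact_mod_cast this
  have hMcast : ∀ᶠ n in atTop, ((n - N n : ℕ) : ℝ) = (n:ℝ) - N n := by
    filter_upwards [hlt] with n hn
    rw [Nat.cast_sub hn.le]
  have hMtop : Tendsto (fun n => n - N n) atTop atTop := by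
    rw [← tendsto_natCast_atTop_iff (R := ℝ)]
    apply tendsto_atTop_mono' atTop ?_
      (Tendsto.const_mul_atTop (by linarith : (0:ℝ) < 1 - a) tendsto_natCast_atTop_atTop)
    filter_upwards [hMcast] with n hn
    rw [hn]
    have := hNa n
    nlinarith
  have hone : Tendsto (fun n : ℕ => (n:ℝ)/n) atTop (𝓝 1) := by
    refine Tendsto.congr' ?_ tendsto_const_nhds
    filter_upwards [eventually_ge_atTop 1] with n hn
    have hn' : (n:ℝ) ≠ 0 := by
      have : (1:ℝ) ≤ n := by exact_mod_cast hn
      linarith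
    rw [div_self hn']
  have hMdiv : Tendsto (fun n => ((n - N n : ℕ) : ℝ) / n) atTop (𝓝 (1 - a)) := by
    apply Tendsto.congr' _ (hone.sub hNdiv)
    filter_upwards [hMcast] with n hn
    rw [hn, sub_div]
  have hcN := cb_lim.comp hNtop
  have hcM := cb_lim.comp hMtop
  have h1a : Tendsto (fun n : ℕ => ((N n:ℝ)+1)/n) atTop (𝓝 a) := by
    have := hNdiv.add tendsto_one_div_atTop_nhds_zero_nat
    rw [add_zero] at this
    apply this.congr fun n => ?_
    rw [← add_div]
  have hd : Tendsto (fun n : ℕ => ((N n : ℝ) + 1)/n * Real.sqrt ((N n : ℝ)/n) *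
      Real.sqrt (((n - N n : ℕ):ℝ)/n)) atTop (𝓝 (a * Real.sqrt a * Real.sqrt (1 - a))) :=
    (h1a.mul hNdiv.sqrt).mul hMdiv.sqrt
  have hkey : Tendsto (fun n : ℕ => (n:ℝ)^((3:ℝ)/2) * x n) atTop
      (𝓝 ((1/Real.sqrt π * (1/Real.sqrt π) / (1/Real.sqrt π)) /
        (a * Real.sqrt a * Real.sqrt (1-a)))) := by
    have hda : (0:ℝ) < 1 - a := by linarith
    apply Tendsto.congr' _ (((hcN.mul hcM).div cb_lim (by positivity)).div hd (by positivity))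
    filter_upwards [hlt, hNtop.eventually_ge_atTop 1, hMtop.eventually_ge_atTop 1,
      eventually_ge_atTop 1] with n hn1 hn2 hn3 hn4
    have hnn : (1:ℝ) ≤ (n:ℝ) := by exact_mod_cast hn4
    have hNN : (1:ℝ) ≤ (N n:ℝ) := by exact_mod_cast hn2
    have hMM : (1:ℝ) ≤ ((n - N n : ℕ):ℝ) := by exact_mod_cast hn3
    have hcat : (catalan (N n) : ℝ) = (Nat.centralBinom (N n) : ℝ) / ((N n : ℝ) + 1) := by
      rw [eq_div_iff (by positivity)]
      have := succ_mul_catalan_eq_centralBinom (N n)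
      have h' : ((N n + 1) * catalan (N n) : ℕ) = (Nat.centralBinom (N n) : ℕ) := this
      calc (catalan (N n) : ℝ) * ((N n : ℝ) + 1) = (((N n + 1) * catalan (N n) : ℕ) : ℝ) := by
            push_cast; ring
        _ = (Nat.centralBinom (N n) : ℝ) := by rw [h']
    have h4 : (4:ℝ)^n = 4^(N n) * 4^(n - N n) := by
      rw [← pow_add]; congr 1; omega
    have hrpow : (n:ℝ)^((3:ℝ)/2) = (n:ℝ) * Real.sqrt n := by
      rw [show (3:ℝ)/2 = 1 + 1/2 by norm_num, Real.rpow_add (by linarith), Real.rpow_one,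
        ← Real.sqrt_eq_rpow]
    have hdivN : Real.sqrt ((N n : ℝ)/n) = Real.sqrt (N n) / Real.sqrt n :=
      Real.sqrt_div (by positivity) _
    have hdivM : Real.sqrt (((n - N n : ℕ) : ℝ)/n) = Real.sqrt ((n - N n : ℕ)) / Real.sqrt n :=
      Real.sqrt_div (by positivity) _
    have hcc : ∀ m : ℕ, ((2*m).choose m : ℝ) = (Nat.centralBinom m : ℝ) := fun m => rfl
    simp only [Pi.div_apply, Function.comp_apply, hxdef]
    rw [hcat, hrpow, hdivN, hdivM, h4, hcc, hcc]
    have e1 : Real.sqrt (n:ℝ) ≠ 0 := by positivity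
    have e2 : Real.sqrt (N n:ℝ) ≠ 0 := by positivity
    have e3 : Real.sqrt ((n - N n : ℕ):ℝ) ≠ 0 := by positivity
    have e4 : ((Nat.choose (2*n) n : ℕ) : ℝ) ≠ 0 := by
      have := Nat.choose_pos (show n ≤ 2*n by omega)
      exact_mod_cast this.ne'
    have e5 : (N n : ℝ) + 1 ≠ 0 := by positivity
    have e6 : (n : ℝ) ≠ 0 := by linarith
    have e7 : (4:ℝ)^(N n) ≠ 0 := by positivity
    have e8 : (4:ℝ)^(n - N n) ≠ 0 := by positivity
    have e9 : (Nat.centralBinom n : ℝ) ≠ 0 := by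
      exact_mod_cast (Nat.centralBinom_pos n).ne'
    field_simp
  have hconst : (1/Real.sqrt π * (1/Real.sqrt π) / (1/Real.sqrt π)) /
      (a * Real.sqrt a * Real.sqrt (1-a)) = 1 / Real.sqrt (π * a^3 * (1-a)) := by
    have hda : (0:ℝ) < 1 - a := by linarith
    have h1 : Real.sqrt (π * a^3 * (1-a)) =
        Real.sqrt π * (a * Real.sqrt a) * Real.sqrt (1-a) := by
      rw [Real.sqrt_mul (by positivity), Real.sqrt_mul (le_of_lt hπ),
        show a^3 = a^2 * a by ring, Real.sqrt_mul (by positivity), Real.sqrt_sq ha0.le]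
    rw [h1]
    have e1 : Real.sqrt π ≠ 0 := by positivity
    have e2 : Real.sqrt a ≠ 0 := by positivity
    have e3 : Real.sqrt (1-a) ≠ 0 := by positivity
    have hss : Real.sqrt π * Real.sqrt π = π := Real.mul_self_sqrt hπ.le
    field_simp
  rw [hconst] at hkey
  have hpow0 : Tendsto (fun n : ℕ => ((n:ℝ))^(-((3:ℝ)/2))) atTop (𝓝 0) :=
    (tendsto_rpow_neg_atTop (by norm_num : (0:ℝ) < 3/2)).comp tendsto_natCast_atTop_atTop
  have hx0 : Tendsto x atTop (𝓝 0) := by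
    refine Tendsto.congr' ?_ (by simpa using hkey.mul hpow0)
    filter_upwards [eventually_ge_atTop 1] with n hn
    have hnn : (0:ℝ) < n := by exact_mod_cast hn
    have hcancel : (n:ℝ)^((3:ℝ)/2) * (n:ℝ)^(-((3:ℝ)/2)) = 1 := by
      rw [← Real.rpow_add hnn]; norm_num
    calc (n:ℝ)^((3:ℝ)/2) * x n * (n:ℝ)^(-((3:ℝ)/2))
        = x n * ((n:ℝ)^((3:ℝ)/2) * (n:ℝ)^(-((3:ℝ)/2))) := by ring
      _ = x n := by rw [hcancel, mul_one]
  have hxpos : ∀ n : ℕ, 0 < x n := by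
    intro n
    apply div_pos
    · apply mul_pos
      · exact_mod_cast cat_pos (N n)
      · exact_mod_cast Nat.choose_pos (show n - N n ≤ 2*(n - N n) by omega)
    · exact_mod_cast Nat.choose_pos (show n ≤ 2*n by omega)
  have hx0' : Tendsto x atTop (𝓝[≠] (0:ℝ)) := by
    apply tendsto_nhdsWithin_of_tendsto_nhds_of_eventually_within x hx0
    exact Eventually.of_forall fun n => (hxpos n).ne'
  have hder : HasDerivAt (fun y : ℝ => Real.log (1 - y)) (-1) 0 := by
    have h1 : HasDerivAt (fun y : ℝ => 1 - y) (-1) 0 := by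
      simpa using (hasDerivAt_id (0:ℝ)).const_sub 1
    have := h1.log (by norm_num)
    simpa using this
  have hslope := hasDerivAt_iff_tendsto_slope.mp hder
  have hlog : Tendsto (fun n => slope (fun y : ℝ => Real.log (1 - y)) 0 (x n)) atTop
      (𝓝 (-1)) := hslope.comp hx0'
  refine Tendsto.congr' ?_ (by simpa [mul_neg_one] using hkey.mul hlog)
  filter_upwards [] with n
  rw [slope_def_field]
  have hxne := (hxpos n).ne'
  simp only [Real.log_one, sub_zero, zero_sub]
  field_simp
  ring
end

section
/- At the critical adsorption point z = 2, for every a ∈ (0,1), the directed path pressure satisfies lim_{n→∞, n even} √n · P_n^T(2; 2⌊an/2⌋) = −√(2/(π·a)). -/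
open Filter Real

section Aux

open Finset Stirling Topology

private lemma tp_nat (ν : ℕ) : 2 * (∑ m ∈ range (ν + 1), Nat.choose (2 * ν) (ν + m))
    = 4 ^ ν + Nat.centralBinom ν := by
  have h1 : ∑ m ∈ range (ν + 1), Nat.choose (2 * ν) (ν + m)
      = (∑ m ∈ range ν, Nat.choose (2 * ν) (ν + 1 + m)) + Nat.centralBinom ν := by
    rw [Finset.sum_range_succ', Nat.centralBinom]
    congr 1
    exact Finset.sum_congr rfl fun m _ => by rw [show ν + (m + 1) = ν + 1 + m by omega]
  have h2 : ∑ m ∈ range ν, Nat.choose (2 * ν) (ν + 1 + m)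
      = ∑ m ∈ range ν, Nat.choose (2 * ν) m := by
    rw [← Finset.sum_range_reflect]
    apply Finset.sum_congr rfl
    intro m hm
    rw [Finset.mem_range] at hm
    rw [show ν + 1 + (ν - 1 - m) = 2 * ν - m by omega, Nat.choose_symm (by omega)]
  have h3 : (∑ m ∈ range ν, Nat.choose (2 * ν) m) + ∑ m ∈ range (ν + 1), Nat.choose (2 * ν) (ν + m)
      = 4 ^ ν := by
    have h := Finset.sum_range_add (fun m => Nat.choose (2 * ν) m) ν (ν + 1)
    rw [show ν + (ν + 1) = 2 * ν + 1 by omega, Nat.sum_range_choose] at h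
    rw [show (4:ℕ) ^ ν = 2 ^ (2 * ν) by rw [pow_mul]; norm_num]
    exact h.symm
  omega

private lemma Tp_two (ν : ℕ) : Tp ν 2 = (4 ^ ν + Nat.centralBinom ν) / 2 := by
  have h : ((2 * (∑ m ∈ range (ν + 1), Nat.choose (2 * ν) (ν + m)) : ℕ) : ℝ)
      = ((4 ^ ν + Nat.centralBinom ν : ℕ) : ℝ) := by rw [tp_nat]
  push_cast at h
  rw [Tp]
  simp only [show (2:ℝ) - 1 = 1 by norm_num, one_pow, mul_one]
  linarith

private lemma Dp_two (ν : ℕ) : Dp ν 2 = Nat.centralBinom ν := by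
  rw [Dp]
  have key : ∀ m ∈ Finset.range (ν + 1),
      ((2 * (m : ℝ) + 1) / ((ν : ℝ) + m + 1)) * (Nat.choose (2 * ν) (ν + m)) * (2 - 1) ^ m
      = (fun i => (Nat.choose (2 * ν) (ν + i) : ℝ)) m
        - (fun i => (Nat.choose (2 * ν) (ν + i) : ℝ)) (m + 1) := by
    intro m hm
    rw [Finset.mem_range] at hm
    simp only
    have hnat : Nat.choose (2*ν) (ν+m+1) * (ν+m+1) = Nat.choose (2*ν) (ν+m) * (ν - m) := by
      have := Nat.choose_succ_right_eq (2*ν) (ν+m)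
      rw [show 2*ν - (ν+m) = ν - m by omega] at this
      exact this
    have hcast := congrArg (fun k : ℕ => (k:ℝ)) hnat
    push_cast [Nat.cast_sub (show m ≤ ν by omega)] at hcast
    rw [show ν + (m + 1) = ν + m + 1 by omega]
    have h1 : ((2:ℝ) - 1) ^ m = 1 := by norm_num
    rw [h1, mul_one]
    have hne : ((ν:ℝ) + m + 1) ≠ 0 := by positivity
    field_simp
    linarith [hcast]
  rw [Finset.sum_congr rfl key, Finset.sum_range_sub' (fun i => (Nat.choose (2 * ν) (ν + i) : ℝ))]
  simp [Nat.centralBinom, Nat.choose_eq_zero_of_lt (show 2*ν < ν + (ν+1) by omega)]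

/-- The normalized central binomial coefficient. -/
private noncomputable def cseq (n : ℕ) : ℝ := (Nat.centralBinom n : ℝ) / 4 ^ n

private lemma cseq_pos (n : ℕ) : 0 < cseq n :=
  div_pos (by exact_mod_cast Nat.centralBinom_pos n) (by positivity)

private lemma key_id (n : ℕ) (hn : n ≠ 0) :
    Real.sqrt n * cseq n = stirlingSeq (2 * n) / stirlingSeq n ^ 2 := by
  rw [cseq]
  have hx : (0:ℝ) < n := Nat.cast_pos.mpr (Nat.pos_of_ne_zero hn)
  have hs : (0:ℝ) < Real.sqrt n := Real.sqrt_pos.mpr hx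
  have hss : Real.sqrt n * Real.sqrt n = (n:ℝ) := Real.mul_self_sqrt hx.le
  have hA : (0:ℝ) < ((n:ℝ) / Real.exp 1) ^ n := by positivity
  have hF : (0:ℝ) < (Nat.factorial n : ℝ) := by positivity
  have hfac : (Nat.centralBinom n : ℝ) * ((Nat.factorial n : ℝ) * (Nat.factorial n : ℝ))
      = (Nat.factorial (2 * n) : ℝ) := by
    have h := Nat.choose_mul_factorial_mul_factorial (show n ≤ 2 * n by omega)
    rw [show 2 * n - n = n by omega] at h
    rw [Nat.centralBinom]
    exact_mod_cast congrArg (Nat.cast (R := ℝ)) (by rw [← h]; ring)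
  have e2 : stirlingSeq n ^ 2
      = (Nat.factorial n : ℝ) ^ 2 / (2 * (n : ℝ) * (((n:ℝ) / Real.exp 1) ^ n) ^ 2) := by
    rw [stirlingSeq, div_pow, mul_pow, Real.sq_sqrt (by positivity)]
  have e1 : stirlingSeq (2 * n)
      = (Nat.factorial (2 * n) : ℝ)
        / (2 * Real.sqrt n * (4 ^ n * (((n:ℝ) / Real.exp 1) ^ n) ^ 2)) := by
    rw [stirlingSeq]
    congr 1
    push_cast
    rw [show (2:ℝ) * (2 * n) = 4 * n by ring, Real.sqrt_mul (by norm_num) (n:ℝ),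
      show Real.sqrt 4 = 2 by rw [show (4:ℝ) = 2 ^ 2 by norm_num, Real.sqrt_sq (by norm_num)],
      show (2:ℝ) * n / Real.exp 1 = 2 * ((n:ℝ) / Real.exp 1) by ring, mul_pow,
      show (2:ℝ) ^ (2 * n) = 4 ^ n by rw [pow_mul]; norm_num, pow_mul']
  have e2' : stirlingSeq n ^ 2
      = (Nat.factorial n : ℝ) ^ 2
        / (2 * (Real.sqrt n * Real.sqrt n) * (((n:ℝ) / Real.exp 1) ^ n) ^ 2) := by
    rw [e2, hss]
  rw [e1, e2', ← hfac]
  field_simp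

private lemma tendsto_two_mul_nat : Tendsto (fun n : ℕ => 2 * n) atTop atTop :=
  Filter.tendsto_atTop_atTop.mpr fun b => ⟨b, fun a ha => by omega⟩

private lemma tendsto_sqrt_atTop' : Tendsto Real.sqrt atTop atTop := by
  apply (tendsto_rpow_atTop (by norm_num : (0:ℝ) < 1/2)).congr'
  filter_upwards [eventually_ge_atTop (0:ℝ)] with x hx
  exact (Real.sqrt_eq_rpow x).symm

private lemma tendsto_sqrt_cseq :
    Tendsto (fun n : ℕ => Real.sqrt n * cseq n) atTop (𝓝 ((Real.sqrt π)⁻¹)) := by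
  have hπ : (0:ℝ) < Real.sqrt π := Real.sqrt_pos.mpr pi_pos
  have h2 : Tendsto (fun n : ℕ => stirlingSeq (2 * n)) atTop (𝓝 (Real.sqrt π)) :=
    tendsto_stirlingSeq_sqrt_pi.comp tendsto_two_mul_nat
  have hlim : Tendsto (fun n : ℕ => stirlingSeq (2 * n) / stirlingSeq n ^ 2) atTop
      (𝓝 (Real.sqrt π / Real.sqrt π ^ 2)) :=
    h2.div (tendsto_stirlingSeq_sqrt_pi.pow 2) (by positivity)
  have he : Real.sqrt π / Real.sqrt π ^ 2 = (Real.sqrt π)⁻¹ := by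
    field_simp
  rw [he] at hlim
  apply hlim.congr'
  filter_upwards [eventually_ge_atTop 1] with n hn
  exact (key_id n (by omega)).symm

private lemma tendsto_cseq_zero : Tendsto cseq atTop (𝓝 0) := by
  have hinv : Tendsto (fun n : ℕ => (Real.sqrt n)⁻¹) atTop (𝓝 0) :=
    tendsto_inv_atTop_zero.comp
      (tendsto_sqrt_atTop'.comp tendsto_natCast_atTop_atTop)
  have h := tendsto_sqrt_cseq.mul hinv
  rw [mul_zero] at h
  apply h.congr'
  filter_upwards [eventually_ge_atTop 1] with n hn
  have hs : Real.sqrt n ≠ 0 := by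
    have : (0:ℝ) < n := by exact_mod_cast Nat.pos_of_ne_zero (by omega)
    positivity
  field_simp

private lemma tendsto_log_one_sub_div :
    Tendsto (fun t : ℝ => Real.log (1 - t) / t) (nhdsWithin 0 {(0:ℝ)}ᶜ) (𝓝 (-1)) := by
  have hd : HasDerivAt (fun t : ℝ => Real.log (1 - t)) (-1) 0 := by
    have h1 : HasDerivAt (fun t : ℝ => 1 - t) (-1) 0 := by
      simpa using (hasDerivAt_id (0:ℝ)).const_sub 1
    simpa using h1.log (by norm_num)
  have h := hasDerivAt_iff_tendsto_slope.mp hd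
  apply h.congr
  intro t
  simp [slope_def_field, div_eq_mul_inv]

end Aux

open Topology

/-- At the critical point `z = 2`, for `a ∈ (0,1)`,
`lim_{n→∞, n even} √n · P_n^T(2; 2⌊an/2⌋) = −√(2/(π·a))`. -/
theorem directed_pressure_critical (a : ℝ) (ha0 : 0 < a) (ha1 : a < 1) :
    Tendsto (fun ν : ℕ => Real.sqrt (2 * (ν : ℝ)) * PT ν ⌊a * (ν : ℝ)⌋₊ 2) atTop
      (nhds (-Real.sqrt (2 / (π * a)))) := by
  have hπ : (0:ℝ) < π := pi_pos
  set κ : ℕ → ℕ := fun ν => ⌊a * (ν:ℝ)⌋₊ with hκdef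
  set x : ℕ → ℝ := fun ν => cseq (κ ν) * (1 + cseq (ν - κ ν)) / (1 + cseq ν) with hxdef
  have hxpos : ∀ ν, 0 < x ν := fun ν =>
    div_pos (mul_pos (cseq_pos _) (by linarith [cseq_pos (ν - κ ν)]))
      (by linarith [cseq_pos ν])
  -- κ tends to infinity
  have hκtop : Tendsto κ atTop atTop := by
    apply tendsto_nat_floor_atTop.comp
    exact (tendsto_natCast_atTop_atTop (R := ℝ)).const_mul_atTop ha0
  -- κ ν < ν eventually
  have hκlt : ∀ᶠ ν : ℕ in atTop, κ ν < ν := by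
    filter_upwards [eventually_ge_atTop 1] with ν hν
    have h1 : (κ ν : ℝ) ≤ a * ν := Nat.floor_le (by positivity)
    have h2 : a * ν < ν := by
      have : (0:ℝ) < ν := by exact_mod_cast hν
      nlinarith
    exact_mod_cast h1.trans_lt h2
  -- ν - κ ν tends to infinity
  have hνκtop : Tendsto (fun ν : ℕ => ν - κ ν) atTop atTop := by
    rw [tendsto_atTop]
    intro b
    filter_upwards [(tendsto_natCast_atTop_atTop (R := ℝ)).eventually_ge_atTop
      ((b:ℝ)/(1-a))] with ν hν
    have h1 : (κ ν : ℝ) ≤ a * ν := Nat.floor_le (by positivity)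
    have h2 : (b:ℝ) ≤ ν * (1-a) := (div_le_iff₀ (by linarith)).mp hν
    have h3 : (κ ν : ℝ) + b ≤ ν := by nlinarith
    have h4 : κ ν + b ≤ ν := by exact_mod_cast h3
    omega
  -- ratio limit
  have hrat : Tendsto (fun ν : ℕ => (κ ν : ℝ) / ν) atTop (𝓝 a) :=
    (tendsto_nat_floor_mul_div_atTop ha0.le).comp tendsto_natCast_atTop_atTop
  -- √(2ν) · cseq (κ ν) limit
  have hsqx : Tendsto (fun ν : ℕ => Real.sqrt (2 * ν) * cseq (κ ν)) atTop
      (𝓝 (Real.sqrt (2/a) * (Real.sqrt π)⁻¹)) := by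
    have hA : Tendsto (fun ν : ℕ => Real.sqrt ((2 * ν : ℝ) / κ ν)) atTop
        (𝓝 (Real.sqrt (2/a))) := by
      apply Filter.Tendsto.sqrt
      have h2a : Tendsto (fun ν : ℕ => 2 / ((κ ν : ℝ) / ν)) atTop (𝓝 (2/a)) :=
        (tendsto_const_nhds).div hrat ha0.ne'
      apply h2a.congr'
      filter_upwards [eventually_ge_atTop 1, hκtop.eventually_ge_atTop 1] with ν h1 h2
      have hν0 : ((ν:ℝ)) ≠ 0 := by positivity
      have hκ0 : ((κ ν : ℝ)) ≠ 0 := by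
        have : 0 < κ ν := h2
        positivity
      field_simp
    have hB : Tendsto (fun ν : ℕ => Real.sqrt (κ ν) * cseq (κ ν)) atTop
        (𝓝 ((Real.sqrt π)⁻¹)) := tendsto_sqrt_cseq.comp hκtop
    have := hA.mul hB
    apply this.congr'
    filter_upwards [hκtop.eventually_ge_atTop 1] with ν h1
    have hκ0 : (0:ℝ) < (κ ν : ℝ) := by exact_mod_cast h1
    rw [← mul_assoc, ← Real.sqrt_mul (by positivity) (κ ν : ℝ),
      div_mul_cancel₀ _ hκ0.ne']
  -- the fraction tends to 1
  have hBfac : Tendsto (fun ν : ℕ => (1 + cseq (ν - κ ν)) / (1 + cseq ν)) atTop (𝓝 1) := by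
    have hnum : Tendsto (fun ν : ℕ => 1 + cseq (ν - κ ν)) atTop (𝓝 1) := by
      have := tendsto_const_nhds (x := (1:ℝ)) (f := atTop (α := ℕ)) |>.add
        (tendsto_cseq_zero.comp hνκtop)
      simpa using this
    have hden : Tendsto (fun ν : ℕ => 1 + cseq ν) atTop (𝓝 1) := by
      have := tendsto_const_nhds (x := (1:ℝ)) (f := atTop (α := ℕ)) |>.add tendsto_cseq_zero
      simpa using this
    have := hnum.div hden one_ne_zero
    rw [div_one] at this
    exact this
  -- √(2ν) · x ν limit
  have hL : Real.sqrt (2/a) * (Real.sqrt π)⁻¹ = Real.sqrt (2/(π*a)) := by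
    rw [show (2:ℝ)/(π*a) = (2/a)/π by field_simp,
      Real.sqrt_div (by positivity) π]
    exact (div_eq_mul_inv _ _).symm
  have hsx : Tendsto (fun ν : ℕ => Real.sqrt (2 * ν) * x ν) atTop
      (𝓝 (Real.sqrt (2/(π*a)))) := by
    have := hsqx.mul hBfac
    rw [mul_one, hL] at this
    apply this.congr
    intro ν
    simp only [hxdef]
    ring
  -- x tends to 0
  have hx0 : Tendsto x atTop (𝓝 0) := by
    have := (tendsto_cseq_zero.comp hκtop).mul hBfac
    rw [zero_mul] at this
    apply this.congr
    intro ν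
    simp only [hxdef, Function.comp]
    ring
  -- log factor tends to -1
  have hlog : Tendsto (fun ν : ℕ => Real.log (1 - x ν) / x ν) atTop (𝓝 (-1)) := by
    apply tendsto_log_one_sub_div.comp
    rw [tendsto_nhdsWithin_iff]
    exact ⟨hx0, Eventually.of_forall fun ν => by simp [(hxpos ν).ne']⟩
  -- assemble
  have hfin := hsx.mul hlog
  rw [show Real.sqrt (2/(π*a)) * (-1) = -Real.sqrt (2/(π*a)) by ring] at hfin
  apply hfin.congr'
  filter_upwards [hκlt] with ν hν
  have hxne : x ν ≠ 0 := (hxpos ν).ne'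
  have hPT : PT ν (κ ν) 2 = Real.log (1 - x ν) := by
    rw [PT, Dp_two, Tp_two, Tp_two]
    congr 2
    have h4 : (4:ℝ) ^ κ ν * 4 ^ (ν - κ ν) = 4 ^ ν := by
      rw [← pow_add]
      congr 1
      omega
    have hd1 : (0:ℝ) < 4 ^ ν + Nat.centralBinom ν := by positivity
    simp only [hxdef, cseq]
    rw [← h4]
    have p1 : ((4:ℝ)) ^ κ ν ≠ 0 := by positivity
    have p2 : ((4:ℝ)) ^ (ν - κ ν) ≠ 0 := by positivity
    have p3 : (0:ℝ) < 4 ^ κ ν * 4 ^ (ν - κ ν) + Nat.centralBinom ν := by positivity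
    have p4 : (0:ℝ) < 1 + (Nat.centralBinom ν : ℝ) / (4 ^ κ ν * 4 ^ (ν - κ ν)) := by positivity
    field_simp
  rw [hPT]
  field_simp
end
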